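/- For σ > 1 there do not exist integers g > h ≥ 0 and an integer k ≥ 1 and positive reals c, d such that all three of the following hold: (i) c·d·((g-h)(1-σ) + (k-1)(2σ-1)) ≤ 0; (ii) -c³d³·(g-h-2(k-1))·(g-h-(k-1))·((g-h)(1-σ)+(k-1)(2σ-1)) ≤ 0; (iii) c³d³·(g-h-2(k-1))·(k-1)·(-(k-1)+(g-h-2(k-1))σ) ≤ 0. -/
import Mathlib


theorem stmt7 (σ : ℝ) (hσ : 1 < σ) :
    ¬ ∃ (g h k : ℤ) (c d : ℝ), 0 ≤ h ∧ h < g ∧ 1 ≤ k ∧ 0 < c ∧ 0 < d ∧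
      c * d * (((g : ℝ) - h) * (1 - σ) + ((k : ℝ) - 1) * (2*σ - 1)) ≤ 0 ∧
      -(c^3 * d^3) * ((g : ℝ) - h - 2*((k : ℝ) - 1)) * ((g : ℝ) - h - ((k : ℝ) - 1)) *
        (((g : ℝ) - h) * (1 - σ) + ((k : ℝ) - 1) * (2*σ - 1)) ≤ 0 ∧
      c^3 * d^3 * ((g : ℝ) - h - 2*((k : ℝ) - 1)) * ((k : ℝ) - 1) *
        (-((k : ℝ) - 1) + ((g : ℝ) - h - 2*((k : ℝ) - 1)) * σ) ≤ 0 := by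
  rintro ⟨g, h, k, c, d, hh, hg, hk, hc, hd, h1, h2, h3⟩
  have hM : (1 : ℝ) ≤ (g : ℝ) - h := by
    have : (h : ℝ) + 1 ≤ g := by exact_mod_cast hg
    linarith
  have hK : (0 : ℝ) ≤ (k : ℝ) - 1 := by
    have : (1 : ℝ) ≤ k := by exact_mod_cast hk
    linarith
  set M : ℝ := (g : ℝ) - h with hMdef
  set K : ℝ := (k : ℝ) - 1 with hKdef
  have hcd : 0 < c * d := mul_pos hc hd
  have hcd3 : 0 < c ^ 3 * d ^ 3 := by positivity
  have hE : M * (1 - σ) + K * (2 * σ - 1) ≤ 0 := by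
    by_contra hcon
    push_neg at hcon
    nlinarith
  rcases lt_or_eq_of_le hE with hElt | hEeq
  · have hM2K : 0 < M - 2 * K := by nlinarith
    have hMK : 0 < M - K := by linarith
    nlinarith [mul_pos (mul_pos hcd3 hM2K) hMK]
  · have hEeq' : M * (1 - σ) + K * (2 * σ - 1) = 0 := hEeq
    have hKpos : 0 < K := by nlinarith
    have hM2K : 0 < M - 2 * K := by nlinarith
    have hlast : 0 < -K + (M - 2 * K) * σ := by nlinarith
    nlinarith [mul_pos (mul_pos (mul_pos hcd3 hM2K) hKpos) hlast]
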